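/- Let Γ be a bipartite (n+1)-colored graph of order 2p, and ε = (ε_0 ε_1 … ε_n) a cyclic permutation of the colors. Then the quantity Σ_{j∈Z_{n+1}} g_{ε_j,ε_{j+1}} + (1−n)p is an even integer at most 2, where g_{i,j} denotes the number of {i,j}-bicolored cycles of Γ; equivalently, there is a nonnegative integer ρ_ε(Γ) with 2 − 2ρ_ε(Γ) = Σ_j g_{ε_j,ε_{j+1}} + (1−n)p. -/

import Mathlib

/-- An `n`-colored graph: a finite connected `n`-regular multigraph without loops,
equipped with a proper edge-coloring by the `n` colors `Fin n`. -/
structure ColoredGraph (n : ℕ) where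
  V : Type
  E : Type
  [fintypeV : Fintype V]
  [fintypeE : Fintype E]
  ends : E → Sym2 V
  no_loops : ∀ e : E, ¬ (ends e).IsDiag
  color : E → Fin n
  proper : ∀ e₁ e₂ : E, e₁ ≠ e₂ → color e₁ = color e₂ →
      ∀ v : V, ¬ (v ∈ ends e₁ ∧ v ∈ ends e₂)
  regular : ∀ v : V, Set.ncard {e : E | v ∈ ends e} = n
  connected : ∀ v w : V,
      Relation.ReflTransGen (fun a b => ∃ e : E, a ∈ ends e ∧ b ∈ ends e) v w

attribute [instance] ColoredGraph.fintypeV ColoredGraph.fintypeE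

namespace ColoredGraph

variable {n : ℕ} (G : ColoredGraph n)

/-- Reachability using only edges whose color lies in `Δ`. -/
def Reach (Δ : Set (Fin n)) (v w : G.V) : Prop :=
  Relation.EqvGen (fun a b => ∃ e : G.E, G.color e ∈ Δ ∧ a ∈ G.ends e ∧ b ∈ G.ends e) v w

/-- The `Δ`-residue containing `v`. -/
def residue (Δ : Set (Fin n)) (v : G.V) : Set G.V := {u | G.Reach Δ v u}

def residueSetoid (Δ : Set (Fin n)) : Setoid G.V :=
  ⟨G.Reach Δ, Relation.EqvGen.is_equivalence _⟩

/-- number of `Δ`-residues, i.e. connected components of the spanning subgraph `Γ_Δ`. -/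
noncomputable def numResidues (Δ : Set (Fin n)) : ℕ :=
  Nat.card (Quotient (G.residueSetoid Δ))

end ColoredGraph

namespace ColoredGraph

/-- A colored multigraph is bipartite if its vertices admit a proper 2-coloring. -/
def Bipartite {n : ℕ} (G : ColoredGraph n) : Prop :=
  ∃ f : G.V → Bool, ∀ e : G.E, ∀ v ∈ G.ends e, ∀ w ∈ G.ends e, v ≠ w → f v ≠ f w

end ColoredGraph


/-!
Colour the vertices of `Γ` black and white and let `p_c` be the involution exchanging the two
ends of every `c`-coloured edge. On the `p` black vertices the permutations
`σ_j = p_{ε_j} p_{ε_{j+1}}` have the `{ε_j, ε_{j+1}}`-residues as their cycles, their product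
`σ_0 ⋯ σ_n` telescopes to `1`, and they generate a transitive group because `Γ` is connected.
For permutations `σ_0, …, σ_n` of `N` points with product one generating a transitive group,
`∑ j, (N - #cycles σ_j)` is even and at least `2N - 2` (Riemann–Hurwitz for permutations);
with `N = p` this is the claim.
-/

open Equiv Equiv.Perm MulAction Subgroup

namespace Setoid

variable {X : Type*}

lemma card_quotient_eq_card_of_rel_imp_eq (r : Setoid X) (h : ∀ x y, r x y → x = y) :
    Nat.card (Quotient r) = Nat.card X :=
  (Nat.card_eq_of_bijective _
    ⟨fun _ _ hxy => h _ _ (Quotient.exact hxy), Quotient.mk_surjective⟩).symm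

def glue (s : Setoid X) (a b : X) : Setoid X where
  r x y := s x y ∨ ((s x a ∨ s x b) ∧ (s y a ∨ s y b))
  iseqv.refl x := .inl (s.refl' x)
  iseqv.symm := by
    rintro x y (h | ⟨hx, hy⟩)
    exacts [.inl (s.symm' h), .inr ⟨hy, hx⟩]
  iseqv.trans := by
    rintro x y z (hxy | ⟨hx, hy⟩) (hyz | ⟨hy', hz⟩)
    · exact .inl (s.trans' hxy hyz)
    · exact .inr ⟨hy'.imp (s.trans' hxy) (s.trans' hxy), hz⟩
    · exact .inr ⟨hx, hy.imp (s.trans' (s.symm' hyz)) (s.trans' (s.symm' hyz))⟩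
    · exact .inr ⟨hx, hz⟩

variable {s : Setoid X} {a b : X}

lemma le_glue : s ≤ s.glue a b := fun _ _ => .inl

lemma glue_rel : s.glue a b a b := .inr ⟨.inl (s.refl' a), .inr (s.refl' b)⟩

lemma glue_le {t : Setoid X} (hst : s ≤ t) (hab : t a b) : s.glue a b ≤ t := by
  have key : ∀ {x}, s x a ∨ s x b → t x a :=
    fun h => h.elim (fun h => hst h) fun h => t.trans' (hst h) (t.symm' hab)
  rintro x y (h | ⟨hx, hy⟩)
  exacts [hst h, t.trans' (key hx) (t.symm' (key hy))]

lemma glue_eq_self (hab : s a b) : s.glue a b = s :=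
  le_antisymm (glue_le le_rfl hab) le_glue

/-- Away from the class of `b`, the quotient map of `s` becomes injective after gluing. -/
lemma card_quotient_glue_add_one [Finite X] (hab : ¬ s a b) :
    Nat.card (Quotient (s.glue a b)) + 1 = Nat.card (Quotient s) := by
  classical
  have : Fintype X := Fintype.ofFinite X
  let φ : {q : Quotient s // q ≠ ⟦b⟧} → Quotient (s.glue a b) :=
    fun q => Quotient.map' id (fun _ _ => .inl) q.1
  have hφ : Function.Bijective φ := by
    constructor
    · rintro ⟨q, hq⟩ ⟨q', hq'⟩ h
      induction q using Quotient.ind with | _ x =>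
      induction q' using Quotient.ind with | _ y =>
      have hx : ¬ s x b := fun h => hq (Quotient.sound h)
      have hy : ¬ s y b := fun h => hq' (Quotient.sound h)
      refine Subtype.ext (Quotient.sound ?_)
      rcases Quotient.exact h with h | ⟨hxa | hxb, hya | hyb⟩
      exacts [h, s.trans' hxa (s.symm' hya), absurd hyb hy, absurd hxb hx, absurd hxb hx]
    · intro q
      induction q using Quotient.ind with | _ x =>
      by_cases hxb : s x b
      · exact ⟨⟨⟦a⟧, fun h => hab (Quotient.exact h)⟩,
          Quotient.sound (.inr ⟨.inl (s.refl' a), .inr hxb⟩)⟩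
      · exact ⟨⟨⟦x⟧, fun h => hxb (Quotient.exact h)⟩, rfl⟩
  rw [← Nat.card_congr (Equiv.ofBijective φ hφ), Nat.card_eq_fintype_card,
    Nat.card_eq_fintype_card, Fintype.card_subtype_compl, Fintype.card_subtype_eq]
  have := Fintype.card_pos_iff.2 ⟨(⟦b⟧ : Quotient s)⟩
  omega

def classPreservingPerms (r : Setoid X) : Subgroup (Perm X) where
  carrier := {g | ∀ x, r x (g x)}
  one_mem' := r.refl'
  mul_mem' {g h} hg hh x := r.trans' (hh x) (hg (h x))
  inv_mem' {g} hg x := by simpa using r.symm' (hg (g⁻¹ x))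

lemma mem_classPreservingPerms {r : Setoid X} {g : Perm X} :
    g ∈ r.classPreservingPerms ↔ ∀ x, r x (g x) :=
  Iff.rfl

lemma swap_mem_classPreservingPerms_glue [DecidableEq X] (s : Setoid X) (a b : X) :
    swap a b ∈ (s.glue a b).classPreservingPerms := by
  intro x
  by_cases hxa : x = a
  · subst hxa
    rw [swap_apply_left]
    exact glue_rel
  by_cases hxb : x = b
  · subst hxb
    rw [swap_apply_right]
    exact (s.glue a x).symm' glue_rel
  · rw [swap_apply_of_ne_of_ne hxa hxb]

end Setoid

open Setoid

namespace Equiv.Perm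

variable {X : Type*}

lemma sameCycle_setoid_le {r : Setoid X} {π : Perm X} (h : ∀ x, r x (π x)) :
    SameCycle.setoid π ≤ r := by
  rintro x y ⟨i, rfl⟩
  exact zpow_mem (mem_classPreservingPerms.2 h) i x

lemma orbitRel_closure_le {r : Setoid X} {S : Set (Perm X)} (h : ∀ g ∈ S, ∀ x, r x (g x)) :
    orbitRel (closure S) X ≤ r := by
  rintro x y ⟨g, rfl⟩
  exact r.symm' ((closure_le r.classPreservingPerms).2 h g.2 y)

noncomputable def numOrbits (H : Subgroup (Perm X)) : ℕ := Nat.card (orbitRel.Quotient H X)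

noncomputable def numCycles (π : Perm X) : ℕ := Nat.card (Quotient (SameCycle.setoid π))

lemma numOrbits_bot : numOrbits (⊥ : Subgroup (Perm X)) = Nat.card X :=
  card_quotient_eq_card_of_rel_imp_eq _ fun _ _ ⟨g, hg⟩ => by
    rw [← hg, Subsingleton.elim g 1]
    rfl

lemma numOrbits_le_one [Finite X] (H : Subgroup (Perm X)) [IsPretransitive H X] :
    numOrbits H ≤ 1 :=
  have := (pretransitive_iff_subsingleton_quotient H X).1 inferInstance
  Finite.card_le_one_iff_subsingleton.2 this

lemma numCycles_one : numCycles (1 : Perm X) = Nat.card X :=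
  card_quotient_eq_card_of_rel_imp_eq _ fun _ _ => sameCycle_one.1

lemma numCycles_le_card [Finite X] (π : Perm X) : numCycles π ≤ Nat.card X :=
  Nat.card_le_card_of_surjective _ Quotient.mk_surjective

variable [DecidableEq X]

lemma orbitRel_closure_insert_swap (S : Set (Perm X)) (a b : X) :
    orbitRel (closure (insert (swap a b) S)) X = (orbitRel (closure S) X).glue a b := by
  refine le_antisymm (orbitRel_closure_le ?_) (glue_le ?_ ?_)
  · rintro g (rfl | hg) x
    · exact swap_mem_classPreservingPerms_glue _ a b x
    · exact le_glue (symm' _ ⟨⟨g, subset_closure hg⟩, rfl⟩)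
  · exact fun x y ⟨g, hg⟩ => ⟨⟨g, closure_mono (Set.subset_insert _ _) g.2⟩, hg⟩
  · exact ⟨⟨swap a b, subset_closure (Set.mem_insert _ _)⟩, swap_apply_right a b⟩

lemma numOrbits_closure_insert_swap_of_rel {S : Set (Perm X)} {a b : X}
    (hab : orbitRel (closure S) X a b) :
    numOrbits (closure (insert (swap a b) S)) = numOrbits (closure S) := by
  unfold numOrbits orbitRel.Quotient
  rw [orbitRel_closure_insert_swap, glue_eq_self hab]

lemma numOrbits_closure_insert_swap_add_one [Finite X] {S : Set (Perm X)} {a b : X}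
    (hab : ¬ orbitRel (closure S) X a b) :
    numOrbits (closure (insert (swap a b) S)) + 1 = numOrbits (closure S) := by
  unfold numOrbits orbitRel.Quotient
  rw [orbitRel_closure_insert_swap]
  exact card_quotient_glue_add_one hab

variable [Finite X] {π : Perm X} {a b : X}

/-- Following `π * swap a b` from `a` traces the `π`-cycle of `b`, which cannot contain `a`. -/
lemma sameCycle_mul_swap_of_not_sameCycle (hab : ¬ π.SameCycle a b) :
    (π * swap a b).SameCycle a b := by
  set σ := π * swap a b
  by_contra h
  have key : ∀ i : ℕ, σ.SameCycle a ((π ^ (i + 1)) b) := by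
    intro i
    induction i with
    | zero => exact ⟨1, by simp [σ]⟩
    | succ i ih =>
      have hxa : (π ^ (i + 1)) b ≠ a := fun hx => hab (hx ▸ sameCycle_pow_left.2 (.refl _ _))
      have hxb : (π ^ (i + 1)) b ≠ b := fun hx => h (hx ▸ ih)
      refine ih.trans ⟨1, ?_⟩
      rw [zpow_one, pow_succ' π (i + 1)]
      simp [σ, swap_apply_of_ne_of_ne hxa hxb]
  have hord := key (orderOf π - 1)
  rw [Nat.sub_add_cancel (orderOf_pos π), pow_orderOf_eq_one] at hord
  exact h hord

/-- The arc `π a, π² a, …, b` of the `π`-cycle through `a` and `b` is invariant under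
`π * swap a b` and does not contain `a`. -/
lemma not_sameCycle_mul_swap_of_sameCycle (hne : a ≠ b) (hab : π.SameCycle a b) :
    ¬ (π * swap a b).SameCycle a b := by
  classical
  set σ := π * swap a b
  have hex : ∃ k, (π ^ (k + 1)) a = b := by
    obtain ⟨i, hi, -, h⟩ := hab.exists_pow_eq''
    exact ⟨i - 1, by rwa [Nat.sub_add_cancel hi]⟩
  set k := Nat.find hex
  have hk : (π ^ (k + 1)) a = b := Nat.find_spec hex
  have hne_b : ∀ i < k, (π ^ (i + 1)) a ≠ b := fun i hi => Nat.find_min hex hi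
  have hne_a : ∀ i ≤ k, (π ^ (i + 1)) a ≠ a := by
    intro i hi h
    rcases hi.lt_or_eq with hi | rfl
    · refine hne_b (k - i - 1) (by omega) ?_
      calc (π ^ (k - i - 1 + 1)) a = (π ^ (k - i - 1 + 1)) ((π ^ (i + 1)) a) := by rw [h]
        _ = (π ^ (k + 1)) a := by rw [← mul_apply, ← pow_add]; congr 2; omega
        _ = b := hk
    · exact hne (h.symm.trans hk)
  let A : Set X := {x | ∃ i ≤ k, (π ^ (i + 1)) a = x}
  have hA : ∀ x ∈ A, σ x ∈ A := by
    rintro _ ⟨i, hi, rfl⟩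
    rcases hi.lt_or_eq with hi | rfl
    · refine ⟨i + 1, hi, ?_⟩
      rw [show σ _ = π _ from congrArg π (swap_apply_of_ne_of_ne (hne_a i hi.le) (hne_b i hi)),
        ← mul_apply, ← pow_succ']
    · exact ⟨0, k.zero_le, by simp [σ, hk]⟩
  have hpow : ∀ j : ℕ, (σ ^ j) b ∈ A := by
    intro j
    induction j with
    | zero => exact ⟨k, le_rfl, hk⟩
    | succ j ih => rw [pow_succ', mul_apply]; exact hA _ ih
  rintro hσ
  obtain ⟨j, -, hj⟩ := hσ.symm.exists_pow_eq'
  obtain ⟨i, hi, hia⟩ := hj ▸ hpow j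
  exact hne_a i hi hia

lemma sameCycle_setoid_mul_swap (hab : ¬ π.SameCycle a b) :
    SameCycle.setoid (π * swap a b) = (SameCycle.setoid π).glue a b := by
  set σ := π * swap a b
  have hσ : σ.SameCycle a b := sameCycle_mul_swap_of_not_sameCycle hab
  refine le_antisymm (sameCycle_setoid_le fun x => ?_)
    (glue_le (sameCycle_setoid_le fun x => ?_) hσ)
  · exact (glue _ a b).trans' (swap_mem_classPreservingPerms_glue _ a b x)
      (le_glue (SameCycle.refl π _).apply_right)
  · have hswap := swap_mem_classPreservingPerms_glue (SameCycle.setoid σ) a b x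
    rw [glue_eq_self hσ] at hswap
    show σ.SameCycle x (π x)
    simpa [σ] using hswap.trans (SameCycle.refl σ (swap a b x)).apply_right

lemma numCycles_mul_swap_add_one (hab : ¬ π.SameCycle a b) :
    numCycles (π * swap a b) + 1 = numCycles π := by
  rw [numCycles, sameCycle_setoid_mul_swap hab]
  exact card_quotient_glue_add_one hab

lemma numCycles_mul_swap_of_sameCycle (hne : a ≠ b) (hab : π.SameCycle a b) :
    numCycles (π * swap a b) = numCycles π + 1 := by
  have := numCycles_mul_swap_add_one (not_sameCycle_mul_swap_of_sameCycle hne hab)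
  rwa [mul_assoc, swap_mul_self, mul_one, eq_comm] at this

lemma numCycles_mul_swap_le (hne : a ≠ b) : numCycles (π * swap a b) ≤ numCycles π + 1 := by
  by_cases hab : π.SameCycle a b
  · exact (numCycles_mul_swap_of_sameCycle hne hab).le
  · have := numCycles_mul_swap_add_one hab
    omega

/-- Splitting off `swap a (π a)` raises the number of cycles by one, until `π = 1`. -/
lemma exists_swap_factors (π : Perm X) : ∃ l : List (Perm X),
    (∀ g ∈ l, IsSwap g) ∧ l.prod = π ∧ l.length + numCycles π = Nat.card X := by
  by_cases hπ : π = 1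
  · exact ⟨[], by simp, by simp [hπ], by simp [hπ, numCycles_one]⟩
  obtain ⟨a, ha⟩ : ∃ a, π a ≠ a := not_forall.1 fun h => hπ (ext h)
  have hsplit := numCycles_mul_swap_of_sameCycle ha.symm (SameCycle.refl π a).apply_right
  have := numCycles_le_card (π * swap a (π a))
  obtain ⟨l, hl, hprod, hlen⟩ := exists_swap_factors (π * swap a (π a))
  refine ⟨l ++ [swap a (π a)], ?_, ?_, ?_⟩
  · simpa [or_imp, forall_and] using ⟨hl, a, π a, ha.symm, rfl⟩
  · simp [hprod, mul_assoc]
  · simp only [List.length_append, List.length_singleton]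
    omega
termination_by Nat.card X - numCycles π
decreasing_by omega

/-- A swap whose points lie in one orbit of the group generated so far adds at most one cycle;
otherwise it merges two cycles and two orbits. -/
lemma numCycles_list_prod_add_card_le {l : List (Perm X)} (hl : ∀ g ∈ l, IsSwap g) :
    numCycles l.prod + Nat.card X ≤ l.length + 2 * numOrbits (closure {g | g ∈ l}) := by
  induction l using List.reverseRecOn with
  | nil => simp [numCycles_one, numOrbits_bot, two_mul]
  | append_singleton l τ ih =>
    obtain ⟨a, b, hne, rfl⟩ := hl τ (by simp)
    have ih := ih fun g hg => hl g (by simp [hg])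
    have hset : {g | g ∈ l ++ [swap a b]} = insert (swap a b) {g | g ∈ l} := by
      ext; simp [or_comm]
    rw [hset, List.prod_append, List.prod_singleton, List.length_append, List.length_singleton]
    by_cases hab : orbitRel (closure {g | g ∈ l}) X a b
    · rw [numOrbits_closure_insert_swap_of_rel hab]
      have := numCycles_mul_swap_le (π := l.prod) hne
      omega
    · have hprod : l.prod ∈ closure {g | g ∈ l} := list_prod_mem fun g hg => subset_closure hg
      have hcyc : ¬ l.prod.SameCycle a b := fun h =>
        hab (sameCycle_setoid_le (r := orbitRel _ X) (fun x => symm' _ ⟨⟨_, hprod⟩, rfl⟩) h)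
      have := numCycles_mul_swap_add_one hcyc
      have := numOrbits_closure_insert_swap_add_one hab
      omega

lemma even_length_of_prod_eq_one {l : List (Perm X)} (hl : ∀ g ∈ l, IsSwap g)
    (hprod : l.prod = 1) : Even l.length := by
  have := Fintype.ofFinite X
  have := sign_prod_list_swap hl
  rw [hprod, sign_one, eq_comm] at this
  exact (neg_one_pow_eq_one_iff_even (by decide)).1 this

/-- Factor each permutation into `card X - numCycles` swaps: the resulting word has product one,
so it has even length, and it generates a transitive group, so it has length at least
`2 * card X - 2`. -/
theorem exists_genus_of_list_prod_eq_one (L : List (Perm X)) (hprod : L.prod = 1)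
    [IsPretransitive (closure {g | g ∈ L}) X] :
    ∃ ρ : ℕ, (L.map fun g => (numCycles g : ℤ)).sum + (2 - L.length) * Nat.card X
      = 2 - 2 * ρ := by
  choose w hw_swap hw_prod hw_len using exists_swap_factors (X := X)
  set M := (L.map w).flatten
  have hM_swap : ∀ τ ∈ M, IsSwap τ := by
    simp only [M, List.mem_flatten, List.mem_map]
    rintro τ ⟨_, ⟨g, -, rfl⟩, hτ⟩
    exact hw_swap g τ hτ
  have hM_prod : M.prod = 1 := by
    simp [M, List.prod_flatten, List.map_map, Function.comp_def, hw_prod, hprod]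
  have hM_len : (M.length : ℤ) + (L.map fun g => (numCycles g : ℤ)).sum
      = L.length * Nat.card X :=
    calc (M.length : ℤ) + (L.map fun g => (numCycles g : ℤ)).sum
        = (L.map fun g => ((w g).length + numCycles g : ℤ)).sum := by
          simp [M, List.length_flatten, List.sum_map_add, Nat.cast_list_sum, Function.comp_def]
      _ = (L.map fun _ => (Nat.card X : ℤ)).sum :=
          congrArg _ (List.map_congr_left fun g _ => by exact_mod_cast hw_len g)
      _ = L.length * Nat.card X := by simp
  have : IsPretransitive (closure {g | g ∈ M}) X := by
    have hle : closure {g | g ∈ L} ≤ closure {g | g ∈ M} := (closure_le _).2 fun g hg => by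
      rw [SetLike.mem_coe, ← hw_prod g]
      exact list_prod_mem fun τ hτ =>
        subset_closure (List.mem_flatten.2 ⟨_, List.mem_map_of_mem hg, hτ⟩)
    refine ⟨fun x y => ?_⟩
    obtain ⟨g, hg⟩ := exists_smul_eq (closure {g | g ∈ L}) x y
    exact ⟨⟨g, hle g.2⟩, hg⟩
  have hbound := numCycles_list_prod_add_card_le hM_swap
  rw [hM_prod, numCycles_one] at hbound
  have := numOrbits_le_one (closure {g | g ∈ M})
  obtain ⟨c, hc⟩ := even_length_of_prod_eq_one hM_swap hM_prod
  refine ⟨c + 1 - Nat.card X, ?_⟩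
  rw [Nat.cast_sub (by omega)]
  push_cast
  linear_combination hM_len - (by exact_mod_cast hc : (M.length : ℤ) = c + c)

end Equiv.Perm

namespace ColoredGraph

variable {n : ℕ} (G : ColoredGraph n)

lemma existsUnique_edge (v : G.V) (c : Fin n) : ∃! e, v ∈ G.ends e ∧ G.color e = c := by
  set S : Set G.E := {e | v ∈ G.ends e}
  have hinj : Set.InjOn G.color S := fun e₁ h₁ e₂ h₂ h =>
    by_contra fun hne => G.proper e₁ e₂ hne h v ⟨h₁, h₂⟩
  have himage : G.color '' S = Set.univ := by
    refine Set.eq_of_subset_of_ncard_le (Set.subset_univ _) ?_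
    rw [hinj.ncard_image, G.regular v, Set.ncard_univ, Nat.card_eq_fintype_card,
      Fintype.card_fin]
  obtain ⟨e, he, rfl⟩ := himage ▸ Set.mem_univ c
  exact ⟨e, ⟨he, rfl⟩, fun e' ⟨he', hc⟩ => hinj he' he hc⟩

noncomputable def edgeAt (v : G.V) (c : Fin n) : G.E := (G.existsUnique_edge v c).exists.choose

lemma mem_ends_edgeAt (v : G.V) (c : Fin n) : v ∈ G.ends (G.edgeAt v c) :=
  (G.existsUnique_edge v c).exists.choose_spec.1

lemma color_edgeAt (v : G.V) (c : Fin n) : G.color (G.edgeAt v c) = c :=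
  (G.existsUnique_edge v c).exists.choose_spec.2

lemma edgeAt_color {v : G.V} {e : G.E} (hv : v ∈ G.ends e) : G.edgeAt v (G.color e) = e :=
  (G.existsUnique_edge v _).unique ⟨G.mem_ends_edgeAt v _, G.color_edgeAt v _⟩ ⟨hv, rfl⟩

noncomputable def partner (c : Fin n) (v : G.V) : G.V := Sym2.Mem.other (G.mem_ends_edgeAt v c)

lemma ends_edgeAt (v : G.V) (c : Fin n) : G.ends (G.edgeAt v c) = s(v, G.partner c v) :=
  (Sym2.other_spec (G.mem_ends_edgeAt v c)).symm

lemma partner_ne (c : Fin n) (v : G.V) : G.partner c v ≠ v := fun h =>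
  G.no_loops (G.edgeAt v c) (by rw [ends_edgeAt, h, Sym2.mk_isDiag_iff])

lemma eq_or_eq_partner_of_mem_ends {e : G.E} {u v : G.V} (hv : v ∈ G.ends e)
    (hu : u ∈ G.ends e) : u = v ∨ u = G.partner (G.color e) v := by
  rwa [← G.edgeAt_color hv, ends_edgeAt, Sym2.mem_iff] at hu

lemma partner_involutive (c : Fin n) : Function.Involutive (G.partner c) := by
  intro v
  have hw : G.partner c v ∈ G.ends (G.edgeAt v c) := by
    rw [ends_edgeAt]
    exact Sym2.mem_mk_right _ _
  have := G.eq_or_eq_partner_of_mem_ends hw (G.mem_ends_edgeAt v c)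
  rw [color_edgeAt] at this
  exact (this.resolve_left (G.partner_ne c v).symm).symm

noncomputable def partnerPerm (c : Fin n) : Perm G.V := (G.partner_involutive c).toPerm

lemma reach_partner {Δ : Set (Fin n)} {c : Fin n} (hc : c ∈ Δ) (v : G.V) :
    G.Reach Δ v (G.partner c v) :=
  .rel _ _ ⟨G.edgeAt v c, by rwa [color_edgeAt], by simp [ends_edgeAt]⟩

lemma residueSetoid_le {Δ : Set (Fin n)} {r : Setoid G.V}
    (h : ∀ c ∈ Δ, ∀ v, r v (G.partner c v)) : G.residueSetoid Δ ≤ r :=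
  Setoid.eqvGen_le fun u v ⟨e, he, hu, hv⟩ => by
    rcases G.eq_or_eq_partner_of_mem_ends hu hv with rfl | rfl
    exacts [r.refl' _, h _ he u]

lemma reach_univ (u v : G.V) : G.Reach Set.univ u v :=
  Relation.EqvGen.reflTransGen_le_eqvGen _ _ _ <|
    Relation.ReflTransGen.mono (fun _ _ ⟨e, hu, hv⟩ => ⟨e, Set.mem_univ _, hu, hv⟩) _ _
      (G.connected u v)

lemma apply_partner_eq_not {f : G.V → Bool}
    (hf : ∀ e : G.E, ∀ v ∈ G.ends e, ∀ w ∈ G.ends e, v ≠ w → f v ≠ f w)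
    (c : Fin n) (v : G.V) :
    f (G.partner c v) = !f v :=
  Bool.eq_not_iff.2 (hf _ _ (by simp [ends_edgeAt]) _ (G.mem_ends_edgeAt v c) (G.partner_ne c v))

variable {G} {f : G.V → Bool}

lemma two_mul_card_black (hf : ∀ c v, f (G.partner c v) = !f v) (c : Fin n) :
    2 * Nat.card {v // f v = true} = Nat.card G.V := by
  have e : {v // f v = true} ≃ {v // ¬ f v = true} :=
    (G.partnerPerm c).subtypeEquiv fun v => by simp [partnerPerm, hf]
  rw [two_mul, ← Nat.card_sum, ← Nat.card_congr (Equiv.sumCompl fun v => f v = true)]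
  exact Nat.card_congr ((Equiv.refl _).sumCongr e)

variable (hf : ∀ c v, f (G.partner c v) = !f v)

noncomputable def bicolorPerm (a b : Fin n) : Perm {v // f v = true} :=
  (G.partnerPerm a * G.partnerPerm b).subtypePerm fun v => by simp [partnerPerm, hf]

lemma coe_bicolorPerm_apply (a b : Fin n) (x : {v // f v = true}) :
    (G.bicolorPerm hf a b x : G.V) = G.partner a (G.partner b x) :=
  rfl

lemma bicolorPerm_mul_bicolorPerm (a b c : Fin n) :
    G.bicolorPerm hf a b * G.bicolorPerm hf b c = G.bicolorPerm hf a c := by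
  ext x
  simp [coe_bicolorPerm_apply, G.partner_involutive b _]

lemma bicolorPerm_self (a : Fin n) : G.bicolorPerm hf a a = 1 := by
  ext x
  simp [coe_bicolorPerm_apply, G.partner_involutive a _]

lemma list_prod_range_bicolorPerm (x : ℕ → Fin n) (k : ℕ) :
    ((List.range k).map fun i => G.bicolorPerm hf (x i) (x (i + 1))).prod
      = G.bicolorPerm hf (x 0) (x k) := by
  induction k with
  | zero => simp [bicolorPerm_self]
  | succ k ih => rw [List.prod_range_succ, ih, bicolorPerm_mul_bicolorPerm]

noncomputable def blackRep (c : Fin n) (u : G.V) : {v // f v = true} :=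
  if h : f u = true then ⟨u, h⟩ else ⟨G.partner c u, by simp [hf, h]⟩

lemma blackRep_coe (c : Fin n) (x : {v // f v = true}) : G.blackRep hf c x = x :=
  dif_pos x.2

lemma reach_blackRep {Δ : Set (Fin n)} {c : Fin n} (hc : c ∈ Δ) (u : G.V) :
    G.Reach Δ u (G.blackRep hf c u) := by
  unfold blackRep
  split_ifs
  exacts [.refl _, G.reach_partner hc u]

lemma rel_blackRep_partner {r : Setoid {v // f v = true}} {c₀ c : Fin n}
    (hr : ∀ x, r x (G.bicolorPerm hf c₀ c x)) (u : G.V) :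
    r (G.blackRep hf c₀ u) (G.blackRep hf c₀ (G.partner c u)) := by
  unfold blackRep
  by_cases h : f u = true
  · rw [dif_pos h, dif_neg (by simp [hf, h])]
    exact hr ⟨u, h⟩
  · have h' : f (G.partner c u) = true := by simp [hf, h]
    rw [dif_neg h, dif_pos h']
    have hback : G.bicolorPerm hf c₀ c ⟨_, h'⟩ = ⟨G.partner c₀ u, by simp [hf, h]⟩ :=
      Subtype.ext (congrArg (G.partner c₀) (G.partner_involutive c u))
    exact hback ▸ r.symm' (hr ⟨_, h'⟩)

lemma rel_blackRep_of_reach {Δ : Set (Fin n)} {r : Setoid {v // f v = true}} {c₀ : Fin n}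
    (hr : ∀ c ∈ Δ, ∀ x, r x (G.bicolorPerm hf c₀ c x)) {u v : G.V} (huv : G.Reach Δ u v) :
    r (G.blackRep hf c₀ u) (G.blackRep hf c₀ v) :=
  G.residueSetoid_le (r := r.comap (G.blackRep hf c₀))
    (fun c hc u => rel_blackRep_partner hf (hr c hc) u) huv

lemma reach_pair_iff_sameCycle (a b : Fin n) (x y : {v // f v = true}) :
    G.Reach {a, b} x y ↔ (G.bicolorPerm hf a b).SameCycle x y := by
  refine ⟨fun h => ?_, fun h => ?_⟩
  · have hr : ∀ c ∈ ({a, b} : Set (Fin n)), ∀ x,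
        (G.bicolorPerm hf a b).SameCycle x (G.bicolorPerm hf a c x) := by
      rintro c (rfl | rfl) x
      · rw [bicolorPerm_self, one_apply]
      · exact (SameCycle.refl _ x).apply_right
    have := rel_blackRep_of_reach hf (r := SameCycle.setoid _) hr h
    rwa [blackRep_coe, blackRep_coe] at this
  · refine sameCycle_setoid_le (r := (G.residueSetoid {a, b}).comap Subtype.val) (fun x => ?_) h
    exact .trans _ _ _ (G.reach_partner (by simp) _) (G.reach_partner (by simp) _)

lemma numResidues_pair_eq_numCycles (a b : Fin n) :
    G.numResidues {a, b} = numCycles (G.bicolorPerm hf a b) := by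
  refine (Nat.card_eq_of_bijective (Quotient.map' Subtype.val
    fun x y => (reach_pair_iff_sameCycle hf a b x y).2) ⟨?_, ?_⟩).symm
  · rintro ⟨x⟩ ⟨y⟩ h
    exact Quotient.sound ((reach_pair_iff_sameCycle hf a b x y).1 (Quotient.exact h))
  · rintro ⟨u⟩
    exact ⟨⟦G.blackRep hf a u⟧, Quotient.sound (.symm _ _ (reach_blackRep hf (by simp) u))⟩

lemma isPretransitive_of_forall_bicolorPerm_mem {K : Subgroup (Perm {v // f v = true})}
    (c₀ : Fin n) (hK : ∀ c, G.bicolorPerm hf c₀ c ∈ K) :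
    IsPretransitive K {v // f v = true} := by
  refine ⟨fun x y => ?_⟩
  have := rel_blackRep_of_reach hf (r := orbitRel K _) (c₀ := c₀)
    (fun c _ x => symm' _ ⟨⟨_, hK c⟩, rfl⟩) (G.reach_univ y x)
  rwa [blackRep_coe, blackRep_coe] at this

lemma isPretransitive_closure_range_bicolorPerm (x : ℕ → Fin n) (m : ℕ)
    (hx : ∀ c, ∃ k ≤ m, x k = c) :
    IsPretransitive
      (closure {g | g ∈ (List.range m).map fun i => G.bicolorPerm hf (x i) (x (i + 1))})
      {v // f v = true} :=
  isPretransitive_of_forall_bicolorPerm_mem hf (x 0) fun c => by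
    obtain ⟨k, hk, rfl⟩ := hx c
    rw [← list_prod_range_bicolorPerm]
    refine list_prod_mem fun g hg => subset_closure ?_
    obtain ⟨i, hi, rfl⟩ := List.mem_map.1 hg
    exact List.mem_map_of_mem (f := fun i => G.bicolorPerm hf (x i) (x (i + 1)))
      (List.mem_range.2 ((List.mem_range.1 hi).trans_le hk))

end ColoredGraph

lemma ZMod.sum_eq_list_sum_range {M : Type*} [AddCommMonoid M] (m : ℕ) (F : ZMod (m + 1) → M) :
    ∑ j, F j = ((List.range (m + 1)).map fun i : ℕ => F i).sum := by
  calc ∑ j, F j = ∑ i ∈ Finset.range (m + 1), F i := by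
        rw [Finset.sum_range]
        exact Fintype.sum_congr _ _ fun i : Fin (m + 1) =>
          congrArg F (ZMod.natCast_zmod_val (n := m + 1) i).symm
    _ = _ := by
        rw [Finset.sum_eq_multiset_sum, Finset.range_val, Multiset.range, Multiset.map_coe,
          Multiset.sum_coe]

/-- for a bipartite (n+1)-colored graph of order 2p and a cyclic
permutation ε of the colors, the quantity Σ_j g_{ε_j,ε_{j+1}} + (1−n)p equals
2 − 2ρ for some nonnegative integer ρ (the genus of the regular embedding surface);
in particular it is an even integer at most 2. -/
theorem regular_genus_exists (n : ℕ) (G : ColoredGraph (n + 1)) (p : ℕ)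
    (hp : Fintype.card G.V = 2 * p) (hbip : G.Bipartite)
    (ε : ZMod (n + 1) → Fin (n + 1)) (hε : Function.Bijective ε) :
    ∃ ρ : ℕ,
      (∑ j : ZMod (n + 1), (G.numResidues {ε j, ε (j + 1)} : ℤ)) + (1 - (n : ℤ)) * p
        = 2 - 2 * (ρ : ℤ) := by
  classical
  obtain ⟨f, hf⟩ := hbip
  have hf := G.apply_partner_eq_not hf
  set x : ℕ → Fin (n + 1) := fun i => ε i
  set L := (List.range (n + 1)).map fun i => G.bicolorPerm hf (x i) (x (i + 1))
  have hprod : L.prod = 1 := by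
    rw [ColoredGraph.list_prod_range_bicolorPerm]
    simp [x, ColoredGraph.bicolorPerm_self]
  have := ColoredGraph.isPretransitive_closure_range_bicolorPerm hf x (n + 1) fun c => by
    obtain ⟨j, rfl⟩ := hε.surjective c
    exact ⟨j.val, (ZMod.val_lt j).le, by simp [x]⟩
  obtain ⟨ρ, hρ⟩ := exists_genus_of_list_prod_eq_one L hprod
  refine ⟨ρ, ?_⟩
  have hcard : Nat.card {v // f v = true} = p := by
    have := G.two_mul_card_black hf 0
    rw [Nat.card_eq_fintype_card (α := G.V), hp] at this
    omega
  rw [← hρ, hcard, ZMod.sum_eq_list_sum_range]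
  simp only [L, x, List.map_map, List.length_map, List.length_range, Function.comp_def,
    ColoredGraph.numResidues_pair_eq_numCycles hf, Nat.cast_succ]
  ring
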